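/- If a topological space X is semi-stratifiable over some ordinal α (linearly semi-stratifiable), then X is a D-space. -/

import Mathlib

/-!
Given an open neighbourhood assignment `N`, give each point `x` a rank `ρ x < α` with
`x ∈ F (ρ x) (N x)`, well-order `X` so that the rank is monotone, and select greedily the
points not covered by `N e` for an earlier selected `e`. The selection covers `X`. For a point
`z`, let `d` be the first selected point with `z ∈ N d`, and let `W` be the union of `N e` over
the selected `e` before `d`. Monotonicity of `F` in both arguments puts all those `e` into the
closed set `F (ρ d) W ⊆ W`, which misses `z`; so `N d \ F (ρ d) W` is a neighbourhood of `z`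
meeting the selection only in `d`. In a T1 space this makes the selection closed and discrete.
-/

open Set TopologicalSpace Filter Topology

/-- `X` is a D-space: for every open neighborhood assignment `N` there is a
closed discrete subset `D` with `⋃ d ∈ D, N d = univ`. -/
def IsDSpace (X : Type*) [TopologicalSpace X] : Prop :=
  ∀ N : X → Set X, (∀ x, IsOpen (N x)) → (∀ x, x ∈ N x) →
    ∃ D : Set X, IsClosed D ∧ DiscreteTopology D ∧ (⋃ d ∈ D, N d) = Set.univ

/-- `X` is semi-stratifiable over the ordinal `α`: there is a map `F` assigning
to each `β < α` and each open `U` a closed set `F β U` such that the sets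
`F β U` for `β < α` cover `U`, `F` is monotone in `U`, and increasing in `β`. -/
def SemiStratifiableOver (X : Type*) [TopologicalSpace X] (α : Ordinal) : Prop :=
  ∃ F : Ordinal → Set X → Set X,
    (∀ β < α, ∀ U : Set X, IsOpen U → IsClosed (F β U)) ∧
    (∀ U : Set X, IsOpen U → U = ⋃ β ∈ Set.Iio α, F β U) ∧
    (∀ U W : Set X, IsOpen U → IsOpen W → U ⊆ W → ∀ β < α, F β U ⊆ F β W) ∧
    (∀ U : Set X, IsOpen U → ∀ γ β : Ordinal, γ < β → β < α → F γ U ⊆ F β U)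

theorem isClosed_and_isDiscrete_of_forall_exists_finite_inter {X : Type*} [TopologicalSpace X]
    [T1Space X] {D : Set X} (h : ∀ z, ∃ V ∈ 𝓝 z, (V ∩ D).Finite) :
    IsClosed D ∧ IsDiscrete D := by
  refine isClosed_and_discrete_iff.2 fun z => ?_
  obtain ⟨V, hV, hfin⟩ := h z
  rw [disjoint_principal_right]
  filter_upwards [nhdsWithin_le_nhds hV, nhdsNE_le_cofinite z hfin.compl_mem_cofinite]
    with x hxV hx hxD
  exact hx ⟨hxV, hxD⟩

section GreedySelection

variable {X : Type*} (r : X → X → Prop) [IsWellOrder X r] (N : X → Set X)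

def greedySelection : Set X :=
  {x | IsWellFounded.fix r (motive := fun _ => Prop)
    (fun x selected => ∀ y (hyx : r y x), selected y hyx → x ∉ N y) x}

theorem mem_greedySelection_iff {x : X} :
    x ∈ greedySelection r N ↔ ∀ y, r y x → y ∈ greedySelection r N → x ∉ N y := by
  rw [greedySelection, mem_ofPred_eq, IsWellFounded.fix_eq]
  rfl

theorem exists_mem_greedySelection (hN : ∀ x, x ∈ N x) (z : X) :
    ∃ d ∈ greedySelection r N, z ∈ N d := by
  by_cases hz : z ∈ greedySelection r N
  · exact ⟨z, hz, hN z⟩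
  · rw [mem_greedySelection_iff] at hz
    push Not at hz
    obtain ⟨d, -, hd, hzd⟩ := hz
    exact ⟨d, hd, hzd⟩

theorem biUnion_greedySelection (hN : ∀ x, x ∈ N x) : ⋃ d ∈ greedySelection r N, N d = univ :=
  eq_univ_of_forall fun z =>
    let ⟨_, hd, hzd⟩ := exists_mem_greedySelection r N hN z
    mem_biUnion hd hzd

theorem exists_mem_nhds_inter_greedySelection_subsingleton [TopologicalSpace X]
    (hNo : ∀ x, IsOpen (N x)) (hN : ∀ x, x ∈ N x)
    (hsep : ∀ d ∈ greedySelection r N, ∃ C, IsClosed C ∧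
      {e ∈ greedySelection r N | r e d} ⊆ C ∧ C ⊆ ⋃ e ∈ {e ∈ greedySelection r N | r e d}, N e)
    (z : X) : ∃ V ∈ 𝓝 z, (V ∩ greedySelection r N).Subsingleton := by
  obtain ⟨d, ⟨hd, hzd⟩, hmin⟩ := (IsWellFounded.wf (r := r)).has_min
    {d | d ∈ greedySelection r N ∧ z ∈ N d} (exists_mem_greedySelection r N hN z)
  obtain ⟨C, hC, hsubC, hCsub⟩ := hsep d hd
  have hzC : z ∉ C := fun hz => by
    obtain ⟨e, ⟨he, hed⟩, hze⟩ := mem_iUnion₂.1 (hCsub hz)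
    exact hmin e ⟨he, hze⟩ hed
  refine ⟨N d \ C, ((hNo d).sdiff hC).mem_nhds ⟨hzd, hzC⟩,
    (subsingleton_singleton (a := d)).anti ?_⟩
  rintro e ⟨⟨hed, heC⟩, he⟩
  rcases trichotomous_of r e d with hlt | rfl | hgt
  · exact absurd (hsubC ⟨he, hlt⟩) heC
  · rfl
  · exact absurd hed ((mem_greedySelection_iff r N).1 he d hgt hd)

end GreedySelection

section SemiStratification

variable {X : Type*} [TopologicalSpace X]

structure IsSemiStratification (α : Ordinal) (F : Ordinal → Set X → Set X) : Prop where
  isClosed : ∀ β < α, ∀ U : Set X, IsOpen U → IsClosed (F β U)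
  eq_biUnion : ∀ U : Set X, IsOpen U → U = ⋃ β ∈ Iio α, F β U
  mono_set : ∀ U W : Set X, IsOpen U → IsOpen W → U ⊆ W → ∀ β < α, F β U ⊆ F β W
  mono_ordinal : ∀ U : Set X, IsOpen U → ∀ γ β : Ordinal, γ < β → β < α → F γ U ⊆ F β U

theorem semiStratifiableOver_iff {α : Ordinal} :
    SemiStratifiableOver X α ↔ ∃ F : Ordinal → Set X → Set X, IsSemiStratification α F :=
  exists_congr fun _ => ⟨fun ⟨h₁, h₂, h₃, h₄⟩ => ⟨h₁, h₂, h₃, h₄⟩, fun h => ⟨h.1, h.2, h.3, h.4⟩⟩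

namespace IsSemiStratification

variable {α β : Ordinal} {F : Ordinal → Set X → Set X} (hF : IsSemiStratification α F)
include hF

theorem exists_lt_mem {U : Set X} (hU : IsOpen U) {x : X} (hx : x ∈ U) : ∃ β < α, x ∈ F β U := by
  rw [hF.eq_biUnion U hU] at hx
  simpa only [mem_iUnion, mem_Iio, exists_prop] using hx

theorem subset {U : Set X} (hU : IsOpen U) (hβ : β < α) : F β U ⊆ U := fun x hx => by
  rw [hF.eq_biUnion U hU]
  exact mem_biUnion hβ hx

theorem mono {U W : Set X} (hU : IsOpen U) (hW : IsOpen W) (hUW : U ⊆ W) {γ : Ordinal}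
    (hγβ : γ ≤ β) (hβ : β < α) : F γ U ⊆ F β W := by
  refine Subset.trans ?_ (hF.mono_set U W hU hW hUW β hβ)
  rcases hγβ.lt_or_eq with hlt | rfl
  exacts [hF.mono_ordinal U hU γ β hlt hβ, subset_rfl]

theorem exists_isClosed_between {N : X → Set X} (hNo : ∀ x, IsOpen (N x)) {ρ : X → Ordinal}
    (hρ : ∀ x, x ∈ F (ρ x) (N x)) {S : Set X} (hβ : β < α) (hS : ∀ e ∈ S, ρ e ≤ β) :
    ∃ C, IsClosed C ∧ S ⊆ C ∧ C ⊆ ⋃ e ∈ S, N e := by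
  have hWo : IsOpen (⋃ e ∈ S, N e) := isOpen_biUnion fun e _ => hNo e
  refine ⟨F β (⋃ e ∈ S, N e), hF.isClosed β hβ _ hWo, fun e he => ?_, hF.subset hWo hβ⟩
  exact hF.mono (hNo e) hWo (subset_biUnion_of_mem he) (hS e he) hβ (hρ e)

end IsSemiStratification

end SemiStratification

section RankLex

variable {X : Type*}

def rankLex {o : Type*} [LT o] (ρ : X → o) : X → X → Prop :=
  (Prod.Lex (· < ·) WellOrderingRel).onFun fun x => (ρ x, x)

instance {o : Type*} [LinearOrder o] [WellFoundedLT o] (ρ : X → o) :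
    IsWellOrder X (rankLex ρ) :=
  Function.Injective.isWellOrder (f := fun x => (ρ x, x)) _ fun _ _ h => congrArg Prod.snd h

theorem rankLex.le {o : Type*} [Preorder o] {ρ : X → o} {x y : X} (h : rankLex ρ x y) :
    ρ x ≤ ρ y :=
  (Prod.lex_iff.1 h).elim le_of_lt fun h => h.1.le

end RankLex

/-- If a T1 space `X` is semi-stratifiable over some ordinal `α` (linearly
semi-stratifiable), then `X` is a D-space. -/
theorem linearlySemiStratifiable_isDSpace (X : Type*) [TopologicalSpace X] [T1Space X]
    (h : ∃ α : Ordinal, SemiStratifiableOver X α) : IsDSpace X := by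
  obtain ⟨α, hα⟩ := h
  obtain ⟨F, hF⟩ := semiStratifiableOver_iff.1 hα
  intro N hNo hN
  choose ρ hρα hρ using fun x => hF.exists_lt_mem (hNo x) (hN x)
  set D := greedySelection (rankLex ρ) N
  have hsep (d : X) (_ : d ∈ D) : ∃ C, IsClosed C ∧
      {e ∈ D | rankLex ρ e d} ⊆ C ∧ C ⊆ ⋃ e ∈ {e ∈ D | rankLex ρ e d}, N e :=
    hF.exists_isClosed_between hNo hρ (hρα d) fun _ he => he.2.le
  have hfin (z : X) : ∃ V ∈ 𝓝 z, (V ∩ D).Finite :=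
    (exists_mem_nhds_inter_greedySelection_subsingleton _ N hNo hN hsep z).imp
      fun _ hV => ⟨hV.1, hV.2.finite⟩
  obtain ⟨hclosed, hdiscrete⟩ := isClosed_and_isDiscrete_of_forall_exists_finite_inter hfin
  exact ⟨D, hclosed, isDiscrete_iff_discreteTopology.1 hdiscrete, biUnion_greedySelection _ N hN⟩
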